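/- Conditional card probability after excluding a dealer natural (Appendix A, different-value case): if count m < t (so the conditioning event has positive probability), then for every value k ≠ m the conditional probability that the first card drawn has value k, given that the dealer's hole card does not have value m, equals (count k / (t − 1)) * ((t − count m − 1) / (t − count m)). (With m = ace and dealer showing a ten this is the formula Q[k] = (a_k/(t−1)) · ((t−a₁−1)/(t−a₁)); with m = ten and dealer showing an ace it is the symmetric formula for d = 1.) -/

import Mathlib

/-!
Left multiplication by a permutation sending `(p, q)` to `(x, y)` shows that all fibres of
`σ ↦ (σ p, σ q)` over pairs `x ≠ y` have the same size, so `(σ p, σ q)` is uniformly distributed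
on ordered pairs of distinct cards. With `K` the cards of value `k` and `M` those of value `m`,
the joint event counts the pairs in `K × Mᶜ` off the diagonal, `#K * (t - #M - 1)` of them since
`K ⊆ Mᶜ`, and the conditioning event counts `(t - 1) * (t - #M)` pairs.
-/

open PMF ENNReal Finset

theorem ENNReal.div_div_div_cancel_right {a b c : ℝ≥0∞} (hc0 : c ≠ 0) (hc : c ≠ ∞) :
    a / c / (b / c) = a / b := by
  rw [div_eq_mul_inv, div_eq_mul_inv, div_eq_mul_inv,
    ENNReal.mul_inv (Or.inr (ENNReal.inv_ne_top.mpr hc0)) (Or.inr (ENNReal.inv_ne_zero.mpr hc)),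
    inv_inv, mul_mul_mul_comm, ENNReal.inv_mul_cancel hc0 hc, mul_one, div_eq_mul_inv]

namespace Equiv.Perm

variable {α : Type*} [DecidableEq α]

theorem exists_apply_eq_and_apply_eq {p q x y : α} (hpq : p ≠ q) (hxy : x ≠ y) :
    ∃ τ : Perm α, τ p = x ∧ τ q = y := by
  refine ⟨(swap p x).trans (swap (swap p x q) y), ?_, by simp⟩
  rw [trans_apply, swap_apply_left]
  refine swap_apply_of_ne_of_ne (fun h => hpq ?_) hxy
  exact (swap p x).injective ((swap_apply_left p x).trans h)

theorem card_filter_apply_eq_and_apply_eq [Fintype α] {p q x y : α} (hpq : p ≠ q) (hxy : x ≠ y) :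
    #{σ : Perm α | σ p = x ∧ σ q = y} = #{σ : Perm α | σ p = p ∧ σ q = q} := by
  obtain ⟨τ, rfl, rfl⟩ := exists_apply_eq_and_apply_eq hpq hxy
  exact card_equiv (Equiv.mulLeft τ⁻¹) fun σ => by simp [Equiv.symm_apply_eq]

theorem card_filter_apply_mem_and_apply_mem [Fintype α] {p q : α} (hpq : p ≠ q) (A B : Finset α) :
    #{σ : Perm α | σ p ∈ A ∧ σ q ∈ B}
      = #{xy ∈ A ×ˢ B | xy.1 ≠ xy.2} * #{σ : Perm α | σ p = p ∧ σ q = q} := by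
  rw [card_eq_sum_card_fiberwise (f := fun σ : Perm α => (σ p, σ q))
    (t := {xy ∈ A ×ˢ B | xy.1 ≠ xy.2}) ?maps, ← smul_eq_mul, ← sum_const]
  case maps =>
    intro σ hσ
    simpa [hpq] using hσ
  refine sum_congr rfl fun ⟨x, y⟩ hxy => ?_
  simp only [mem_filter, mem_product] at hxy
  rw [← card_filter_apply_eq_and_apply_eq hpq hxy.2, filter_filter]
  congr 1
  refine filter_congr fun σ _ => ?_
  simp only [Prod.mk.injEq]
  constructor
  · exact fun h => h.2
  · rintro ⟨hx, hy⟩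
    exact ⟨⟨hx ▸ hxy.1.1, hy ▸ hxy.1.2⟩, hx, hy⟩

end Equiv.Perm

theorem Finset.card_filter_product_ne {α : Type*} [DecidableEq α] (A B : Finset α) :
    #{xy ∈ A ×ˢ B | xy.1 ≠ xy.2} = #A * #B - #(A ∩ B) := by
  have hdiag : {xy ∈ A ×ˢ B | xy.1 = xy.2} = (A ∩ B).diag := by
    ext ⟨x, y⟩
    simp only [mem_filter, mem_product, mem_diag, mem_inter]
    constructor <;> rintro ⟨⟨hx, hy⟩, rfl⟩ <;> exact ⟨⟨hx, hy⟩, rfl⟩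
  have := card_filter_add_card_filter_not (s := A ×ˢ B) (fun xy : α × α => xy.1 = xy.2)
  rw [hdiag, diag_card, card_product] at this
  simp only [ne_eq]
  omega

theorem PMF.uniformOfFintype_perm_apply_mem_and_apply_mem {α : Type*} [Fintype α]
    [DecidableEq α] {p q : α} (hpq : p ≠ q) (A B : Finset α) :
    (uniformOfFintype (Equiv.Perm α)).toOuterMeasure {σ | σ p ∈ A ∧ σ q ∈ B}
      = ((#A * #B - #(A ∩ B) : ℕ) : ℝ≥0∞)
        / ((Fintype.card α * (Fintype.card α - 1) : ℕ) : ℝ≥0∞) := by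
  set c := #{σ : Equiv.Perm α | σ p = p ∧ σ q = q}
  have hc : c ≠ 0 := card_ne_zero_of_mem (a := 1) (by simp)
  have hcard : Fintype.card (Equiv.Perm α) = Fintype.card α * (Fintype.card α - 1) * c := by
    have := Equiv.Perm.card_filter_apply_mem_and_apply_mem hpq univ univ
    rw [card_filter_product_ne] at this
    simpa [Nat.mul_sub_one] using this
  rw [toOuterMeasure_uniformOfFintype_apply, Fintype.card_subtype, hcard]
  simp only [Set.mem_ofPred_eq]
  rw [Equiv.Perm.card_filter_apply_mem_and_apply_mem hpq, card_filter_product_ne,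
    Nat.cast_mul, Nat.cast_mul,
    ENNReal.mul_div_mul_right _ _ (Nat.cast_ne_zero.mpr hc) (natCast_ne_top c)]

/-- Conditional probability, different-value case (Appendix A): if `count m < t`, then
for every value `k ≠ m` the conditional probability that the first card drawn has
value `k`, given that the dealer's hole card does not have value `m`, equals
`(count k / (t − 1)) * ((t − count m − 1) / (t − count m))`. -/
theorem cond_prob_first_eq_k_given_hole_ne_m
    (t : ℕ) (ht : 2 ≤ t) (v : Fin t → Fin 10) (k m : Fin 10) (hkm : k ≠ m) :
    ((PMF.uniformOfFintype (Equiv.Perm (Fin t))).toOuterMeasure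
        {σ : Equiv.Perm (Fin t) |
          v (σ ⟨0, by omega⟩) = k ∧ v (σ ⟨t - 1, by omega⟩) ≠ m})
      / ((PMF.uniformOfFintype (Equiv.Perm (Fin t))).toOuterMeasure
          {σ : Equiv.Perm (Fin t) | v (σ ⟨t - 1, by omega⟩) ≠ m})
      = (((Finset.univ.filter (fun i => v i = k)).card : ℝ≥0∞)
            / ((t - 1 : ℕ) : ℝ≥0∞))
        * (((t - (Finset.univ.filter (fun i => v i = m)).card - 1 : ℕ) : ℝ≥0∞)
            / ((t - (Finset.univ.filter (fun i => v i = m)).card : ℕ) : ℝ≥0∞)) := by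
  set K := univ.filter (fun i => v i = k)
  set M := univ.filter (fun i => v i = m)
  set p : Fin t := ⟨0, by omega⟩
  set q : Fin t := ⟨t - 1, by omega⟩
  have hpq : p ≠ q := by
    simp only [p, q, ne_eq, Fin.mk.injEq]; omega
  have hfirst : {σ : Equiv.Perm (Fin t) | v (σ p) = k ∧ v (σ q) ≠ m}
      = {σ | σ p ∈ K ∧ σ q ∈ Mᶜ} := by ext; simp [K, M]
  have hhole : {σ : Equiv.Perm (Fin t) | v (σ q) ≠ m} = {σ | σ p ∈ univ ∧ σ q ∈ Mᶜ} := by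
    ext; simp [M]
  have hKM : K ∩ Mᶜ = K := inter_eq_left.mpr fun i hi => by
    simp only [K, M, mem_filter, mem_univ, true_and, mem_compl] at hi ⊢
    exact hi ▸ hkm
  rw [hfirst, hhole, uniformOfFintype_perm_apply_mem_and_apply_mem hpq,
    uniformOfFintype_perm_apply_mem_and_apply_mem hpq, hKM, univ_inter, card_compl,
    card_univ, Fintype.card_fin, ← Nat.mul_sub_one, ← Nat.sub_one_mul]
  have hT : ((t * (t - 1) : ℕ) : ℝ≥0∞) ≠ 0 :=
    Nat.cast_ne_zero.mpr (Nat.mul_ne_zero (by omega) (by omega))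
  rw [ENNReal.div_div_div_cancel_right hT (natCast_ne_top _), Nat.cast_mul, Nat.cast_mul,
    ENNReal.mul_div_mul_comm (Or.inr (natCast_ne_top _)) (Or.inl (natCast_ne_top _))]
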